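/- arXiv:2310.05942 — 10 statements merged into one kernel-verified Lean document; each statement's English description precedes it below -/
import Mathlib

section
/- Suppose each utility function f_i is concave on [0, ∞). If (x*, e*, y*, β*, q*, ξ*, λ*) is a competitive equilibrium of the TMAS-FN, then (x*, e*, y*) is a social welfare equilibrium of the TMAS-FN. -/
open Finset

/-- `A` is a node–arc incidence matrix: each column (arc) has exactly one `+1`
(tail node), one `-1` (head node), all other entries `0`. -/
def IsIncidence {n m : ℕ} (A : Fin n → Fin m → ℝ) : Prop :=
  ∀ k : Fin m, ∃ s t : Fin n, s ≠ t ∧ A s k = 1 ∧ A t k = -1 ∧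
    ∀ i : Fin n, i ≠ s → i ≠ t → A i k = 0

/-- Feasibility for the social welfare problem of a TMAS-FN. -/
def SWEFeasible {n m : ℕ} (A : Fin n → Fin m → ℝ) (u : Fin m → ℝ) (a : Fin n → ℝ)
    (x e : Fin n → ℝ) (y : Fin m → ℝ) : Prop :=
  (∑ i, e i = 0) ∧ (∀ i, e i ≤ a i - x i) ∧
  (∀ i, e i = ∑ k, A i k * y k) ∧ (∀ k, 0 ≤ y k ∧ y k ≤ u k) ∧ (∀ i, 0 ≤ x i)

/-- Social welfare equilibrium of a TMAS-FN. -/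
def IsSWE {n m : ℕ} (f : Fin n → ℝ → ℝ) (A : Fin n → Fin m → ℝ) (u : Fin m → ℝ)
    (a : Fin n → ℝ) (x e : Fin n → ℝ) (y : Fin m → ℝ) : Prop :=
  SWEFeasible A u a x e y ∧
  ∀ x' e' y', SWEFeasible A u a x' e' y' → ∑ i, f i (x' i) ≤ ∑ i, f i (x i)

/-- Competitive equilibrium of a TMAS-FN. -/
def IsCE {n m : ℕ} (f : Fin n → ℝ → ℝ) (A : Fin n → Fin m → ℝ) (u : Fin m → ℝ)
    (a : Fin n → ℝ) (x e : Fin n → ℝ) (y : Fin m → ℝ) (β : ℝ) (q : Fin n → ℝ)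
    (ξ : Fin m → ℝ) (lam : Fin n → ℝ) : Prop :=
  -- (i) individual optimality
  (∀ i, 0 ≤ x i ∧ e i ≤ a i - x i ∧
    ∀ xi ei : ℝ, 0 ≤ xi → ei ≤ a i - xi →
      f i xi + lam i * ei ≤ f i (x i) + lam i * e i) ∧
  -- (ii) pricing
  (∀ i, lam i = -(β + q i)) ∧
  -- (iii) balance
  (∑ i, e i = 0) ∧
  -- (iv) flow realization
  (∀ i, e i = ∑ k, A i k * y k) ∧
  (∀ k, 0 ≤ y k ∧ y k ≤ u k) ∧
  -- (v) complementary slackness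
  (∀ k, 0 ≤ ξ k ∧ ξ k * (y k - u k) = 0) ∧
  -- (vi) stationarity for flows
  (∀ k, ξ k = ∑ i, q i * A i k)

/-- every competitive equilibrium is a social welfare equilibrium. -/
theorem ce_implies_swe {n m : ℕ} (f : Fin n → ℝ → ℝ) (A : Fin n → Fin m → ℝ)
    (u : Fin m → ℝ) (a : Fin n → ℝ)
    (hA : IsIncidence A) (hu : ∀ k, 0 < u k) (ha : ∀ i, 0 ≤ a i)
    (hf : ∀ i, ConcaveOn ℝ (Set.Ici (0:ℝ)) (f i))
    (x e : Fin n → ℝ) (y : Fin m → ℝ) (β : ℝ) (q : Fin n → ℝ)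
    (ξ : Fin m → ℝ) (lam : Fin n → ℝ)
    (hce : IsCE f A u a x e y β q ξ lam) :
    IsSWE f A u a x e y := by
  obtain ⟨h1, h2, h3, h4, h5, h6, h7⟩ := hce
  constructor
  · exact ⟨h3, fun i => (h1 i).2.1, h4, h5, fun i => (h1 i).1⟩
  · rintro x' e' y' ⟨g1, g2, g3, g4, g5⟩
    -- sum of individual optimality
    have key : ∑ i, (f i (x' i) + lam i * e' i) ≤ ∑ i, (f i (x i) + lam i * e i) :=
      Finset.sum_le_sum fun i _ => (h1 i).2.2 (x' i) (e' i) (g5 i) (g2 i)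
    -- express Σ lam_i * z_i for flow-realized z
    have hlam : ∀ (z : Fin n → ℝ) (w : Fin m → ℝ), (∑ i, z i = 0) →
        (∀ i, z i = ∑ k, A i k * w k) →
        ∑ i, lam i * z i = -∑ k, ξ k * w k := by
      intro z w hz hzw
      have : ∑ i, lam i * z i = -β * ∑ i, z i - ∑ i, q i * z i := by
        rw [Finset.mul_sum, ← Finset.sum_sub_distrib]
        refine Finset.sum_congr rfl fun i _ => ?_
        rw [h2 i]; ring
      rw [this, hz, mul_zero, zero_sub, neg_inj]
      calc ∑ i, q i * z i = ∑ i, ∑ k, q i * (A i k * w k) := by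
            refine Finset.sum_congr rfl fun i _ => ?_
            rw [hzw i, Finset.mul_sum]
        _ = ∑ k, (∑ i, q i * A i k) * w k := by
            rw [Finset.sum_comm]
            refine Finset.sum_congr rfl fun k _ => ?_
            rw [Finset.sum_mul]
            exact Finset.sum_congr rfl fun i _ => by ring
        _ = ∑ k, ξ k * w k := by
            refine Finset.sum_congr rfl fun k _ => ?_
            rw [h7 k]
    have he : ∑ i, lam i * e i = -∑ k, ξ k * u k := by
      rw [hlam e y h3 h4]
      congr 1
      refine Finset.sum_congr rfl fun k _ => ?_
      have := (h6 k).2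
      nlinarith [this]
    have he' : ∑ i, lam i * e' i = -∑ k, ξ k * y' k := by
      exact hlam e' y' g1 g3
    have hineq : -∑ k, ξ k * u k ≤ -∑ k, ξ k * y' k := by
      have : ∑ k, ξ k * y' k ≤ ∑ k, ξ k * u k :=
        Finset.sum_le_sum fun k _ =>
          mul_le_mul_of_nonneg_left (g4 k).2 (h6 k).1
      linarith
    have : ∑ i, lam i * e i ≤ ∑ i, lam i * e' i := by rw [he, he']; exact hineq
    have hsum : ∑ i, (f i (x' i) + lam i * e' i)
        = (∑ i, f i (x' i)) + ∑ i, lam i * e' i := Finset.sum_add_distrib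
    have hsum2 : ∑ i, (f i (x i) + lam i * e i)
        = (∑ i, f i (x i)) + ∑ i, lam i * e i := Finset.sum_add_distrib
    linarith [key, hsum, hsum2]
end

section
/- Suppose each utility function f_i is concave on [0, ∞). If (x*, e*, y*, β*, q*, ξ*, λ*) is a competitive equilibrium of the TMAS-FN, then the optimal trading price at every agent is nonnegative: λ_i* ≥ 0 for all i = 1,…,n. -/
open Finset

/-- in a competitive equilibrium, all trading prices are nonnegative. -/
theorem ce_prices_nonneg {n m : ℕ} (f : Fin n → ℝ → ℝ) (A : Fin n → Fin m → ℝ)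
    (u : Fin m → ℝ) (a : Fin n → ℝ)
    (hA : IsIncidence A) (hu : ∀ k, 0 < u k) (ha : ∀ i, 0 ≤ a i)
    (hf : ∀ i, ConcaveOn ℝ (Set.Ici (0:ℝ)) (f i))
    (x e : Fin n → ℝ) (y : Fin m → ℝ) (β : ℝ) (q : Fin n → ℝ)
    (ξ : Fin m → ℝ) (lam : Fin n → ℝ)
    (hce : IsCE f A u a x e y β q ξ lam) :
    ∀ i, 0 ≤ lam i := by
  intro i
  obtain ⟨hx, he, hopt⟩ := hce.1 i
  have := hopt (x i) (e i - 1) hx (by linarith)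
  linarith
end

section
/- Consider a TMAS-FN with infinite arc capacities (no upper bound on flows), whose network is connected and contains both orientations of every arc, and suppose each f_i is strictly concave on [0, ∞). If (x, e, y, β, q, ξ, λ) and (x', e', y', β', q', ξ', λ') are two infinite-capacity competitive equilibria with all trading prices positive (λ_i > 0 and λ_i' > 0 for all i), then the trading decisions coincide: e_i = e_i' for all i = 1,…,n. -/
open Finset

/-- Nodes `i` and `j` are joined by some arc (in either orientation). -/
def Adjacent {n m : ℕ} (A : Fin n → Fin m → ℝ) (i j : Fin n) : Prop :=
  ∃ k : Fin m, (A i k = 1 ∧ A j k = -1) ∨ (A i k = -1 ∧ A j k = 1)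

/-- The underlying undirected graph of the flow network is connected. -/
def ConnectedNet {n m : ℕ} (A : Fin n → Fin m → ℝ) : Prop :=
  ∀ i j : Fin n, Relation.ReflTransGen (Adjacent A) i j

/-- For every arc, the reversely oriented arc is also present. -/
def BothOrientations {n m : ℕ} (A : Fin n → Fin m → ℝ) : Prop :=
  ∀ k : Fin m, ∃ k' : Fin m, ∀ i, A i k' = -A i k

/-- Competitive equilibrium of a TMAS-FN with infinite arc capacities. -/
def IsCEInf {n m : ℕ} (f : Fin n → ℝ → ℝ) (A : Fin n → Fin m → ℝ) (a : Fin n → ℝ)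
    (x e : Fin n → ℝ) (y : Fin m → ℝ) (β : ℝ) (q : Fin n → ℝ) (ξ : Fin m → ℝ)
    (lam : Fin n → ℝ) : Prop :=
  -- (i) individual optimality
  (∀ i, 0 ≤ x i ∧ e i ≤ a i - x i ∧
    ∀ xi ei : ℝ, 0 ≤ xi → ei ≤ a i - xi →
      f i xi + lam i * ei ≤ f i (x i) + lam i * e i) ∧
  -- (ii) pricing
  (∀ i, lam i = -(β + q i)) ∧
  -- (iii) balance
  (∑ i, e i = 0) ∧
  -- (iv) flow realization
  (∀ i, e i = ∑ k, A i k * y k) ∧ (∀ k, 0 ≤ y k) ∧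
  -- (v) capacity constraints never binding
  (∀ k, ξ k = 0) ∧
  -- (vi) stationarity for flows
  (∀ k, ξ k = ∑ i, q i * A i k)

/-- with infinite arc capacity and strictly concave utilities,
the trading decisions of any two competitive equilibria with positive prices
coincide. -/
theorem ce_trading_unique {n m : ℕ} (f : Fin n → ℝ → ℝ) (A : Fin n → Fin m → ℝ)
    (a : Fin n → ℝ)
    (hA : IsIncidence A) (hconn : ConnectedNet A) (hrev : BothOrientations A)
    (ha : ∀ i, 0 ≤ a i)
    (hf : ∀ i, StrictConcaveOn ℝ (Set.Ici (0:ℝ)) (f i))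
    (x e : Fin n → ℝ) (y : Fin m → ℝ) (β : ℝ) (q : Fin n → ℝ)
    (ξ : Fin m → ℝ) (lam : Fin n → ℝ)
    (x' e' : Fin n → ℝ) (y' : Fin m → ℝ) (β' : ℝ) (q' : Fin n → ℝ)
    (ξ' : Fin m → ℝ) (lam' : Fin n → ℝ)
    (hce : IsCEInf f A a x e y β q ξ lam)
    (hce' : IsCEInf f A a x' e' y' β' q' ξ' lam')
    (hpos : ∀ i, 0 < lam i) (hpos' : ∀ i, 0 < lam' i) :
    ∀ i, e i = e' i := by
  obtain ⟨hopt, hpr, hbal, hflow, hy, hxiz, hxis⟩ := hce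
  obtain ⟨hopt', hpr', hbal', hflow', hy', hxiz', hxis'⟩ := hce'
  have hq0 : ∀ k, (0:ℝ) = ∑ i, q i * A i k := fun k => by rw [← hxis k, hxiz k]
  have hq0' : ∀ k, (0:ℝ) = ∑ i, q' i * A i k := fun k => by rw [← hxis' k, hxiz' k]
  -- constancy of prices
  have key : ∀ (Q lm : Fin n → ℝ) (b : ℝ), (∀ k, (0:ℝ) = ∑ i, Q i * A i k) →
      (∀ i, lm i = -(b + Q i)) → ∀ i j, lm i = lm j := by
    intro Q lm b hQ hlm i j
    have hadj : ∀ i j, (∃ k : Fin m,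
        (A i k = 1 ∧ A j k = -1) ∨ (A i k = -1 ∧ A j k = 1)) → Q i = Q j := by
      rintro i j ⟨k, hk⟩
      obtain ⟨s, t, hst, hs, ht, h0⟩ := hA k
      have hsub : ∑ u ∈ ({s, t} : Finset (Fin n)), Q u * A u k = ∑ u, Q u * A u k := by
        refine Finset.sum_subset (Finset.subset_univ _) ?_
        intro u _ hu
        simp only [Finset.mem_insert, Finset.mem_singleton, not_or] at hu
        rw [h0 u hu.1 hu.2, mul_zero]
      have hsum : ∑ u, Q u * A u k = Q s * A s k + Q t * A t k :=
        hsub.symm.trans (Finset.sum_pair hst)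
      have hqst : Q s = Q t := by
        have h := hQ k
        rw [hsum, hs, ht] at h
        linarith
      rcases hk with ⟨h1, h2⟩ | ⟨h1, h2⟩
      · have hi : i = s := by
          by_contra hi
          rcases eq_or_ne i t with rfl | hit
          · rw [ht] at h1; norm_num at h1
          · rw [h0 i hi hit] at h1; norm_num at h1
        have hj : j = t := by
          by_contra hj
          rcases eq_or_ne j s with rfl | hjs
          · rw [hs] at h2; norm_num at h2
          · rw [h0 j hjs hj] at h2; norm_num at h2
        rw [hi, hj]; exact hqst
      · have hi : i = t := by
          by_contra hi
          rcases eq_or_ne i s with rfl | his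
          · rw [hs] at h1; norm_num at h1
          · rw [h0 i his hi] at h1; norm_num at h1
        have hj : j = s := by
          by_contra hj
          rcases eq_or_ne j t with rfl | hjt
          · rw [ht] at h2; norm_num at h2
          · rw [h0 j hj hjt] at h2; norm_num at h2
        rw [hi, hj]; exact hqst.symm
    have hQij : Q i = Q j := by
      have h := hconn i j
      induction h with
      | refl => rfl
      | tail _ ha ih => exact ih.trans (hadj _ _ ha)
    rw [hlm i, hlm j, hQij]
  -- e = a - x at any equilibrium with positive prices
  have heq : ∀ (ee xx lamm : Fin n → ℝ), (∀ i, 0 < lamm i) →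
      (∀ i, 0 ≤ xx i ∧ ee i ≤ a i - xx i ∧
        ∀ xi ei : ℝ, 0 ≤ xi → ei ≤ a i - xi →
          f i xi + lamm i * ei ≤ f i (xx i) + lamm i * ee i) →
      ∀ i, ee i = a i - xx i := by
    intro ee xx lamm hp ho i
    obtain ⟨h0, h1, h2⟩ := ho i
    have h3 := h2 (xx i) (a i - xx i) h0 le_rfl
    have h5 : a i - xx i - ee i = 0 := by
      by_contra hne
      have h6 : 0 < a i - xx i - ee i := lt_of_le_of_ne (by linarith) (Ne.symm hne)
      nlinarith [hp i]
    linarith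
  have cross : ∀ j, 0 ≤ (lam j - lam' j) * (e j - e' j) := by
    intro j
    obtain ⟨hx0, hea, hmax⟩ := hopt j
    obtain ⟨hx0', hea', hmax'⟩ := hopt' j
    have h1 := hmax (x' j) (e' j) hx0' hea'
    have h2 := hmax' (x j) (e j) hx0 hea
    nlinarith
  intro i
  have hLam : ∀ j, lam j = lam i := fun j => key q lam β hq0 hpr j i
  have hLam' : ∀ j, lam' j = lam' i := fun j => key q' lam' β' hq0' hpr' j i
  rcases eq_or_ne (lam i) (lam' i) with hLL | hLL
  · -- equal prices: strict concavity forces x i = x' i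
    have hei := heq e x lam hpos hopt i
    have hei' := heq e' x' lam' hpos' hopt' i
    have hxx : x i = x' i := by
      by_contra hne
      obtain ⟨hx0, _, hmaxo⟩ := hopt i
      obtain ⟨hx0', _, hmaxo'⟩ := hopt' i
      have hz0 : (0:ℝ) ≤ 1/2 * x i + 1/2 * x' i := by positivity
      have mz := hmaxo (1/2 * x i + 1/2 * x' i) (a i - (1/2 * x i + 1/2 * x' i)) hz0 le_rfl
      have mz' := hmaxo' (1/2 * x i + 1/2 * x' i) (a i - (1/2 * x i + 1/2 * x' i)) hz0 le_rfl
      rw [hei] at mz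
      rw [hei', hLL.symm] at mz'
      have hconc := (hf i).2 (Set.mem_Ici.mpr hx0) (Set.mem_Ici.mpr hx0') hne
        (by norm_num : (0:ℝ) < 1/2) (by norm_num : (0:ℝ) < 1/2) (by norm_num)
      simp only [smul_eq_mul] at hconc
      nlinarith [mz, mz', hconc]
    rw [hei, hei', hxx]
  · have hsum : ∑ j, (lam i - lam' i) * (e j - e' j) = 0 := by
      rw [← Finset.mul_sum, Finset.sum_sub_distrib, hbal, hbal']
      ring
    have hnn : ∀ j ∈ Finset.univ, 0 ≤ (lam i - lam' i) * (e j - e' j) := by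
      intro j _
      have h := cross j
      rw [hLam j, hLam' j] at h
      exact h
    have h0 := (Finset.sum_eq_zero_iff_of_nonneg hnn).mp hsum i (Finset.mem_univ i)
    rcases mul_eq_zero.mp h0 with h | h
    · exact absurd (by linarith : lam i = lam' i) hLL
    · linarith
end

section
/- Consider a TMAS-FN over a connected network. If (x*, e*, y*, β*, q*, ξ*, λ*) is a competitive equilibrium in which no flow capacity constraint is binding, i.e., y_k* < u_k for all k = 1,…,m, then the trading prices at all agents are equal: λ_i* = λ_j* for all i, j ∈ {1,…,n}. -/
open Finset

/-- in a competitive equilibrium of a TMAS-FN over a connected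
network with no binding flow capacity constraint, the trading prices at all
agents are equal. -/
theorem nonbinding_capacity_equal_prices {n m : ℕ} (f : Fin n → ℝ → ℝ)
    (A : Fin n → Fin m → ℝ) (u : Fin m → ℝ) (a : Fin n → ℝ)
    (hA : IsIncidence A) (hconn : ConnectedNet A)
    (hu : ∀ k, 0 < u k) (ha : ∀ i, 0 ≤ a i)
    (x e : Fin n → ℝ) (y : Fin m → ℝ) (β : ℝ) (q : Fin n → ℝ)
    (ξ : Fin m → ℝ) (lam : Fin n → ℝ)
    (hce : IsCE f A u a x e y β q ξ lam)
    (hnb : ∀ k, y k < u k) :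
    ∀ i j, lam i = lam j := by
  obtain ⟨-, hlam, -, -, -, hcs, hstat⟩ := hce
  -- each ξ k = 0, hence ∑ i, q i * A i k = 0
  have hq0 : ∀ k, ∑ i, q i * A i k = 0 := by
    intro k
    have h1 := (hcs k).2
    have h2 : ξ k = 0 := by
      rcases mul_eq_zero.mp h1 with h | h
      · exact h
      · exact absurd (sub_eq_zero.mp h) (ne_of_lt (hnb k))
    rw [← hstat k, h2]
  -- adjacent nodes have equal q
  have hadj : ∀ i j, Adjacent A i j → q i = q j := by
    intro i j ⟨k, hk⟩
    obtain ⟨s, t, hst, hAs, hAt, hzero⟩ := hA k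
    have hsum : ∑ i, q i * A i k = q s - q t := by
      rw [← Finset.sum_subset (Finset.subset_univ ({s, t} : Finset (Fin n)))]
      · rw [Finset.sum_pair hst, hAs, hAt]; ring
      · intro i _ hi
        simp only [Finset.mem_insert, Finset.mem_singleton, not_or] at hi
        rw [hzero i hi.1 hi.2, mul_zero]
    have hqst : q s = q t := by
      have := hq0 k; rw [hsum] at this; linarith
    -- identify {i,j} with {s,t}
    have his : i = s ∨ i = t := by
      by_contra h
      push_neg at h
      have := hzero i h.1 h.2
      rcases hk with ⟨h1, -⟩ | ⟨h1, -⟩ <;> rw [h1] at this <;> norm_num at this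
    have hjs : j = s ∨ j = t := by
      by_contra h
      push_neg at h
      have := hzero j h.1 h.2
      rcases hk with ⟨-, h1⟩ | ⟨-, h1⟩ <;> rw [h1] at this <;> norm_num at this
    rcases his with rfl | rfl <;> rcases hjs with rfl | rfl <;>
      first
        | rfl
        | exact hqst
        | exact hqst.symm
  have hqconst : ∀ i j, q i = q j := by
    intro i j
    induction hconn i j with
    | refl => rfl
    | tail _ h ih => exact ih.trans (hadj _ _ h)
  intro i j
  rw [hlam i, hlam j, hqconst i j]
end

section
/- Consider the undirected star graph with n nodes (node 1 the center) and m = 2(n−1) arcs, with arc capacities u ∈ ℝ^{2(n−1)}, u_k > 0. Let e ∈ ℝ^n satisfy Σ_{i=1}^n e_i = 0 and (A⁻u)_i < e_i < (A⁺u)_i for all i = 1,…,n. Then there exists a flow vector y ∈ ℝ^{2(n−1)} such that e_i = Σ_{k=1}^{2(n−1)} A_{ik} y_k for all i and 0 < y_k < u_k for all k. -/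
open Finset

/-- Node–arc incidence matrix of the undirected star graph with `n` nodes
(node `0` the center): for `k < n-1`, arc `k` is the directed arc
`(0, k+1)`; arc `n-1+k` is the directed arc `(k+1, 0)`. -/
def starA (n : ℕ) : Fin n → Fin (2 * (n - 1)) → ℝ := fun i k =>
  if k.val < n - 1 then
    (if i.val = 0 then 1 else if i.val = k.val + 1 then -1 else 0)
  else
    (if i.val = k.val - (n - 1) + 1 then 1 else if i.val = 0 then -1 else 0)

/-- `(A⁺u)_i`: the total capacity of arcs leaving node `i`
(`A⁺` is the positive part of `A`). -/
def AposMul {n m : ℕ} (A : Fin n → Fin m → ℝ) (u : Fin m → ℝ) (i : Fin n) : ℝ :=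
  ∑ k, max (A i k) 0 * u k

/-- `(A⁻u)_i`: minus the total capacity of arcs entering node `i`
(`A⁻` is the negative part of `A`). -/
def AnegMul {n m : ℕ} (A : Fin n → Fin m → ℝ) (u : Fin m → ℝ) (i : Fin n) : ℝ :=
  ∑ k, min (A i k) 0 * u k

noncomputable def sEv (n : ℕ) (e : Fin n → ℝ) (j : ℕ) : ℝ :=
  if h : j + 1 < n then e ⟨j + 1, h⟩ else 0

noncomputable def sU (n : ℕ) (u : Fin (2 * (n - 1)) → ℝ) (j : ℕ) : ℝ :=
  if h : j < 2 * (n - 1) then u ⟨j, h⟩ else 1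

noncomputable def sC (n : ℕ) (u : Fin (2 * (n - 1)) → ℝ) (e : Fin n → ℝ) (j : ℕ) : ℝ :=
  (max 0 (-(sEv n e j)) + min (sU n u j) (sU n u (n - 1 + j) - sEv n e j)) / 2

noncomputable def starY (n : ℕ) (u : Fin (2 * (n - 1)) → ℝ) (e : Fin n → ℝ)
    (k : Fin (2 * (n - 1))) : ℝ :=
  if k.val < n - 1 then sC n u e k.val
  else sC n u e (k.val - (n - 1)) + sEv n e (k.val - (n - 1))


lemma starA_eval (n iv : ℕ) (hi : iv < n) (k : Fin (2 * (n - 1))) :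
    starA n ⟨iv, hi⟩ k =
      if k.val < n - 1 then
        (if iv = 0 then 1 else if iv = k.val + 1 then -1 else 0)
      else
        (if iv = k.val - (n - 1) + 1 then 1 else if iv = 0 then -1 else 0) := rfl

lemma sC_bounds (n : ℕ) (u : Fin (2 * (n - 1)) → ℝ) (e : Fin n → ℝ) (j : ℕ)
    (h1 : 0 < sU n u j) (h2 : 0 < sU n u (n - 1 + j))
    (h3 : -(sU n u j) < sEv n e j) (h4 : sEv n e j < sU n u (n - 1 + j)) :
    0 < sC n u e j ∧ sC n u e j < sU n u j ∧ 0 < sC n u e j + sEv n e j ∧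
      sC n u e j + sEv n e j < sU n u (n - 1 + j) := by
  set E := sEv n e j with hE
  set U1 := sU n u j with hU1
  set U2 := sU n u (n - 1 + j) with hU2
  have hab : max 0 (-E) < min U1 (U2 - E) :=
    max_lt (lt_min h1 (by linarith)) (lt_min (by linarith) (by linarith))
  have ha1 : (0:ℝ) ≤ max 0 (-E) := le_max_left _ _
  have ha2 : -E ≤ max 0 (-E) := le_max_right _ _
  have hb1 : min U1 (U2 - E) ≤ U1 := min_le_left _ _
  have hb2 : min U1 (U2 - E) ≤ U2 - E := min_le_right _ _
  have hsc : sC n u e j = (max 0 (-E) + min U1 (U2 - E)) / 2 := rfl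
  rw [hsc]
  refine ⟨by linarith, by linarith, by linarith, by linarith⟩

lemma Aneg_node (n : ℕ) (u : Fin (2 * (n - 1)) → ℝ) (j : ℕ) (hj : j < n - 1) :
    AnegMul (starA n) u ⟨j + 1, by omega⟩ = -(sU n u j) := by
  have hjm : j < 2 * (n - 1) := by omega
  unfold AnegMul
  rw [Finset.sum_eq_single (⟨j, hjm⟩ : Fin (2 * (n - 1)))]
  · simp only [starA, sU, hjm, hj, if_pos, dif_pos]
    norm_num
  · intro k _ hk
    have hkj : k.val ≠ j := by simpa [Fin.ext_iff] using hk
    rcases lt_or_ge k.val (n - 1) with h | h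
    · have h1 : ¬ (j + 1 = 0) := by omega
      have h2 : ¬ (j + 1 = k.val + 1) := by omega
      simp [starA, h, h1, h2, Ne.symm hkj]
    · have h3 : ¬ (k.val < n - 1) := by omega
      rw [starA_eval, if_neg h3]
      split_ifs with hc1 hc2
      · norm_num
      · simp_all
      · norm_num
  · intro h
    exact absurd (Finset.mem_univ _) h

lemma Apos_node (n : ℕ) (u : Fin (2 * (n - 1)) → ℝ) (j : ℕ) (hj : j < n - 1) :
    AposMul (starA n) u ⟨j + 1, by omega⟩ = sU n u (n - 1 + j) := by
  have hjm : n - 1 + j < 2 * (n - 1) := by omega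
  unfold AposMul
  rw [Finset.sum_eq_single (⟨n - 1 + j, hjm⟩ : Fin (2 * (n - 1)))]
  · have h3 : ¬ (n - 1 + j < n - 1) := by omega
    have h4 : j + 1 = n - 1 + j - (n - 1) + 1 := by omega
    simp only [starA, sU, if_neg h3, if_pos h4, dif_pos hjm]
    norm_num
  · intro k _ hk
    have hkj : k.val ≠ n - 1 + j := by simpa [Fin.ext_iff] using hk
    rcases lt_or_ge k.val (n - 1) with h | h
    · have h1 : ¬ (j + 1 = 0) := by omega
      simp only [starA, if_pos h, if_neg h1]
      split_ifs <;> norm_num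
    · have h3 : ¬ (k.val < n - 1) := by omega
      have h2 : ¬ (j + 1 = k.val - (n - 1) + 1) := by omega
      have h1 : ¬ (j + 1 = 0) := by omega
      simp [starA, h3, h2, h1, show ¬ (j = k.val - (n - 1)) by omega]
  · intro h
    exact absurd (Finset.mem_univ _) h

lemma starA_col_sum (n : ℕ) (k : Fin (2 * (n - 1))) : ∑ i, starA n i k = 0 := by
  have hn : 2 ≤ n := by have := k.isLt; omega
  rcases lt_or_ge k.val (n - 1) with h | h
  · have h1 : k.val + 1 < n := by omega
    have hpt : ∀ i : Fin n, starA n i k =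
        (if i = ⟨0, by omega⟩ then 1 else 0) + (if i = ⟨k.val + 1, h1⟩ then (-1 : ℝ) else 0) := by
      intro i
      by_cases hi0 : i.val = 0
      · have : ¬ (i = ⟨k.val + 1, h1⟩) := by simp [Fin.ext_iff]; omega
        simp [starA, h, hi0, Fin.ext_iff, this]
      · by_cases hi1 : i.val = k.val + 1
        · simp [starA, h, hi0, hi1, Fin.ext_iff]
        · simp [starA, h, hi0, hi1, Fin.ext_iff]
    simp_rw [hpt]
    rw [Finset.sum_add_distrib, Finset.sum_ite_eq' _ _ (fun _ => (1:ℝ)),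
      Finset.sum_ite_eq' _ _ (fun _ => (-1:ℝ))]
    simp
  · have h1 : k.val - (n - 1) + 1 < n := by omega
    have hne : k.val - (n - 1) + 1 ≠ 0 := by omega
    have hpt : ∀ i : Fin n, starA n i k =
        (if i = ⟨k.val - (n - 1) + 1, h1⟩ then (1:ℝ) else 0) +
          (if i = ⟨0, by omega⟩ then (-1 : ℝ) else 0) := by
      intro i
      have h3 : ¬ (k.val < n - 1) := by omega
      by_cases hi1 : i.val = k.val - (n - 1) + 1
      · have : ¬ (i = ⟨0, by omega⟩) := by simp [Fin.ext_iff]; omega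
        simp [starA, h3, hi1, Fin.ext_iff, this]
      · by_cases hi0 : i.val = 0
        · simp [starA, h3, hi1, hi0, Fin.ext_iff]
        · simp [starA, h3, hi1, hi0, Fin.ext_iff]
    simp_rw [hpt]
    rw [Finset.sum_add_distrib, Finset.sum_ite_eq' _ _ (fun _ => (1:ℝ)),
      Finset.sum_ite_eq' _ _ (fun _ => (-1:ℝ))]
    simp

lemma flow_row (n : ℕ) (u : Fin (2 * (n - 1)) → ℝ) (e : Fin n → ℝ) (j : ℕ) (hj : j < n - 1) :
    ∑ k, starA n ⟨j + 1, by omega⟩ k * starY n u e k = sEv n e j := by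
  have hA : j < 2 * (n - 1) := by omega
  have hB : n - 1 + j < 2 * (n - 1) := by omega
  set kA : Fin (2 * (n - 1)) := ⟨j, hA⟩ with hkA
  set kB : Fin (2 * (n - 1)) := ⟨n - 1 + j, hB⟩ with hkB
  have hAB : kA ≠ kB := by simp [hkA, hkB, Fin.ext_iff]; omega
  have hpt : ∀ k, starA n ⟨j + 1, by omega⟩ k * starY n u e k =
      (if k = kA then -(starY n u e k) else 0) + (if k = kB then starY n u e k else 0) := by
    intro k
    by_cases h1 : k = kA
    · have hv : k.val = j := by rw [h1]
      have hA1 : starA n ⟨j + 1, by omega⟩ k = -1 := by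
        rw [starA_eval, if_pos (by omega : k.val < n - 1), if_neg (by omega : ¬ (j + 1 = 0)),
          if_pos (by omega : j + 1 = k.val + 1)]
      rw [hA1, if_pos h1, if_neg (h1 ▸ hAB)]
      ring
    · by_cases h2 : k = kB
      · have hv : k.val = n - 1 + j := by rw [h2]
        have hB1 : starA n ⟨j + 1, by omega⟩ k = 1 := by
          rw [starA_eval, if_neg (by omega : ¬ (k.val < n - 1)),
            if_pos (by omega : j + 1 = k.val - (n - 1) + 1)]
        rw [hB1, if_neg h1, if_pos h2]
        ring
      · have hkj : k.val ≠ j := by simpa [hkA, Fin.ext_iff] using h1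
        have hkj2 : k.val ≠ n - 1 + j := by simpa [hkB, Fin.ext_iff] using h2
        have h0 : starA n ⟨j + 1, by omega⟩ k = 0 := by
          rw [starA_eval]
          rcases lt_or_ge k.val (n - 1) with h | h
          · rw [if_pos h, if_neg (by omega : ¬ (j + 1 = 0)),
              if_neg (by omega : ¬ (j + 1 = k.val + 1))]
          · rw [if_neg (by omega : ¬ (k.val < n - 1)),
              if_neg (by omega : ¬ (j + 1 = k.val - (n - 1) + 1)),
              if_neg (by omega : ¬ (j + 1 = 0))]
        rw [h0, if_neg h1, if_neg h2]
        ring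
  simp_rw [hpt]
  rw [Finset.sum_add_distrib, Finset.sum_ite_eq' _ _ (fun k => -(starY n u e k)),
    Finset.sum_ite_eq' _ _ (fun k => starY n u e k)]
  simp only [Finset.mem_univ, if_pos]
  have hyA : starY n u e kA = sC n u e j := by
    simp [starY, hkA, hj]
  have hyB : starY n u e kB = sC n u e j + sEv n e j := by
    have hlt : ¬ (n - 1 + j < n - 1) := by omega
    have hred : n - 1 + j - (n - 1) = j := by omega
    simp [starY, hkB, hlt, hred]
  rw [hyA, hyB]
  ring

/-- over the star graph, any balanced trading vector strictly
within the flow bounds can be realized by a flow strictly inside the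
capacities. -/
theorem star_interior_flow (n : ℕ) (u : Fin (2 * (n - 1)) → ℝ)
    (hu : ∀ k, 0 < u k) (e : Fin n → ℝ) (hbal : ∑ i, e i = 0)
    (hb : ∀ i, AnegMul (starA n) u i < e i ∧ e i < AposMul (starA n) u i) :
    ∃ y : Fin (2 * (n - 1)) → ℝ,
      (∀ i, e i = ∑ k, starA n i k * y k) ∧ ∀ k, 0 < y k ∧ y k < u k := by
  by_cases hn : n ≤ 1
  · refine ⟨fun _ => 0, fun i => ?_, fun k => absurd k.isLt (by omega)⟩
    have hs : (∑ k, starA n i k * (0:ℝ)) = 0 := by simp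
    rw [hs]
    have hn1 : n = 1 := by have := i.isLt; omega
    subst hn1
    have : i = 0 := Subsingleton.elim _ _
    rw [this]
    simpa using hbal
  push_neg at hn
  -- key bounds for each spoke
  have key : ∀ j, j < n - 1 →
      0 < sC n u e j ∧ sC n u e j < sU n u j ∧ 0 < sC n u e j + sEv n e j ∧
        sC n u e j + sEv n e j < sU n u (n - 1 + j) := by
    intro j hj
    have hjm : j < 2 * (n - 1) := by omega
    have hjm2 : n - 1 + j < 2 * (n - 1) := by omega
    have h1 : 0 < sU n u j := by simp only [sU, dif_pos hjm]; exact hu _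
    have h2 : 0 < sU n u (n - 1 + j) := by simp only [sU, dif_pos hjm2]; exact hu _
    have hjn : j + 1 < n := by omega
    have hev : sEv n e j = e ⟨j + 1, hjn⟩ := by simp [sEv, hjn]
    have hblo := (hb ⟨j + 1, hjn⟩).1
    have hbhi := (hb ⟨j + 1, hjn⟩).2
    rw [Aneg_node n u j hj] at hblo
    rw [Apos_node n u j hj] at hbhi
    rw [← hev] at hblo hbhi
    exact sC_bounds n u e j h1 h2 hblo hbhi
  set y := starY n u e with hy
  have hrow : ∀ i : Fin n, i.val ≠ 0 → e i = ∑ k, starA n i k * y k := by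
    intro i hi
    have hj : i.val - 1 < n - 1 := by have := i.isLt; omega
    have hieq : i = ⟨(i.val - 1) + 1, by omega⟩ := Fin.ext (by simp; omega)
    rw [hieq, hy, flow_row n u e (i.val - 1) hj]
    simp [sEv, show i.val - 1 + 1 < n from by omega]
  refine ⟨y, ?_, ?_⟩
  · intro i
    by_cases hi : i.val = 0
    · have htot : ∑ i : Fin n, ∑ k, starA n i k * y k = 0 := by
        rw [Finset.sum_comm]
        have : ∀ k : Fin (2 * (n - 1)), ∑ i : Fin n, starA n i k * y k = 0 := by
          intro k
          rw [← Finset.sum_mul, starA_col_sum, zero_mul]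
        simp [this]
      have hzero : ∑ i : Fin n, (e i - ∑ k, starA n i k * y k) = 0 := by
        rw [Finset.sum_sub_distrib, hbal, htot, sub_zero]
      have hsingle : ∑ i : Fin n, (e i - ∑ k, starA n i k * y k) =
          e ⟨0, by omega⟩ - ∑ k, starA n ⟨0, by omega⟩ k * y k := by
        apply Finset.sum_eq_single
        · intro i' _ hi'
          have : i'.val ≠ 0 := by simpa [Fin.ext_iff] using hi'
          rw [← hrow i' this]; ring
        · intro h; exact absurd (Finset.mem_univ _) h
      have hi0 : i = ⟨0, by omega⟩ := Fin.ext hi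
      rw [hi0]
      have := hsingle ▸ hzero
      linarith [this]
    · exact hrow i hi
  · intro k
    have hk := k.isLt
    rcases lt_or_ge k.val (n - 1) with h | h
    · have hyk : y k = sC n u e k.val := by simp [hy, starY, h]
      have huk : u k = sU n u k.val := by
        simp only [sU, dif_pos k.isLt]
      obtain ⟨b1, b2, _, _⟩ := key k.val h
      rw [hyk, huk]
      exact ⟨b1, b2⟩
    · set j := k.val - (n - 1) with hjdef
      have hj : j < n - 1 := by omega
      have hyk : y k = sC n u e j + sEv n e j := by
        simp [hy, starY, show ¬ (k.val < n - 1) from by omega, hjdef]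
      have hkeq : k = (⟨n - 1 + j, by omega⟩ : Fin (2 * (n - 1))) := Fin.ext (by simp; omega)
      have huk : u k = sU n u (n - 1 + j) := by
        rw [hkeq]
        simp only [sU, dif_pos (show n - 1 + j < 2 * (n - 1) from by omega)]
      obtain ⟨_, _, b3, b4⟩ := key j hj
      rw [hyk, huk]
      exact ⟨b3, b4⟩
end

section
/- Consider a linear-quadratic TMAS-FN over the undirected star graph with n nodes, arc capacities u_k > 0, and local resources satisfying 0 ≤ a_i < (A⁺u)_i for all i. Each agent's utility is f_i(x) = −(1/2) θ1_i x² + θ2_i x with θ1_i ∈ [θ1_min, θ1_max] and θ2_i ∈ [θ2_min, θ2_max], where 0 < θ1_min ≤ θ1_max and 0 < θ2_min ≤ θ2_max. Let C = Σ_{i=1}^n a_i. Suppose (condition 1) θ2_min/θ1_max > C/n, and (condition 2) (A⁻u)_i ≤ a_i − θ2_max/θ1_min for all i. Then there exists a competitive equilibrium (x*, e*, y*, β*, q*, ξ*, λ*) of the TMAS-FN whose trading prices are all equal and positive: λ_1* = λ_2* = ⋯ = λ_n* > 0. -/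
open Finset

section Aux

/-- Quadratic optimality of the truncated solution. -/
lemma quad_opt (t c x xi : ℝ) (ht : 0 < t) (hx : x = max 0 (c / t)) (hxi : 0 ≤ xi) :
    -(1/2) * t * xi ^ 2 + c * xi ≤ -(1/2) * t * x ^ 2 + c * x := by
  rcases le_or_gt c 0 with hc | hc
  · have hx0 : x = 0 := by
      rw [hx, max_eq_left (div_nonpos_iff.mpr (Or.inr ⟨hc, ht.le⟩))]
    subst hx0; nlinarith
  · have hxe : t * x = c := by
      rw [hx, max_eq_right (le_of_lt (div_pos hc ht))]
      field_simp
    have hcx : c * xi = t * x * xi := by rw [← hxe]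
    have hcx2 : c * x = t * x * x := by rw [← hxe]
    nlinarith [mul_nonneg ht.le (sq_nonneg (xi - x))]

lemma starA_eval_lo (n : ℕ) (i : Fin n) (c : Fin (2 * (n - 1))) (hC : (c : ℕ) < n - 1) :
    starA n i c = if (i : ℕ) = 0 then 1 else if (i : ℕ) = (c : ℕ) + 1 then -1 else 0 := by
  simp only [starA, if_pos hC]

lemma starA_eval_hi (n : ℕ) (i : Fin n) (c : Fin (2 * (n - 1))) (hC : ¬ (c : ℕ) < n - 1) :
    starA n i c = if (i : ℕ) = (c : ℕ) - (n - 1) + 1 then 1 else if (i : ℕ) = 0 then -1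
      else 0 := by
  simp only [starA, if_neg hC]

lemma starA_zero (n : ℕ) (i : Fin n) (c : Fin (2 * (n - 1))) (hi : (i : ℕ) ≠ 0)
    (h1 : ¬ (c : ℕ) = (i : ℕ) - 1) (h2 : ¬ (c : ℕ) = (n - 1) + ((i : ℕ) - 1)) :
    starA n i c = 0 := by
  have hcl := c.isLt
  have hin := i.isLt
  by_cases hC : (c : ℕ) < n - 1
  · rw [starA_eval_lo n i c hC, if_neg hi, if_neg (by omega)]
  · rw [starA_eval_hi n i c hC, if_neg (by omega), if_neg hi]

lemma starA_neg1 (n : ℕ) (i : Fin n) (hi : (i : ℕ) ≠ 0) :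
    starA n i ⟨(i : ℕ) - 1, by have := i.isLt; omega⟩ = -1 := by
  have hin := i.isLt
  rw [starA_eval_lo n i _ (show ((⟨(i : ℕ) - 1, by omega⟩ :
      Fin (2 * (n - 1))) : ℕ) < n - 1 by simp only [Fin.val_mk]; omega)]
  rw [if_neg hi, if_pos (by simp; omega)]

lemma starA_pos1 (n : ℕ) (i : Fin n) (hi : (i : ℕ) ≠ 0) :
    starA n i ⟨(n - 1) + ((i : ℕ) - 1), by have := i.isLt; omega⟩ = 1 := by
  have hin := i.isLt
  rw [starA_eval_hi n i _ (by simp), if_pos (by simp; omega)]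

lemma leaf_sum (n : ℕ) (i : Fin n) (hi : (i : ℕ) ≠ 0) (f : Fin (2 * (n - 1)) → ℝ) :
    ∑ k, starA n i k * f k
      = -(f ⟨(i : ℕ) - 1, by have := i.isLt; omega⟩)
        + f ⟨(n - 1) + ((i : ℕ) - 1), by have := i.isLt; omega⟩ := by
  have hin := i.isLt
  rw [Finset.sum_eq_add_of_mem (⟨(i : ℕ) - 1, by omega⟩ : Fin (2 * (n - 1)))
    (⟨(n - 1) + ((i : ℕ) - 1), by omega⟩ : Fin (2 * (n - 1)))
    (Finset.mem_univ _) (Finset.mem_univ _)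
    (by simp only [ne_eq, Fin.mk.injEq]; omega)
    (by
      intro c _ hc
      simp only [ne_eq, Fin.ext_iff] at hc
      rw [starA_zero n i c hi (by simpa using hc.1) (by simpa using hc.2)]
      simp)]
  rw [starA_neg1 n i hi, starA_pos1 n i hi]
  ring

lemma aneg_leaf (n : ℕ) (u : Fin (2 * (n - 1)) → ℝ) (i : Fin n) (hi : (i : ℕ) ≠ 0) :
    AnegMul (starA n) u i = -(u ⟨(i : ℕ) - 1, by have := i.isLt; omega⟩) := by
  have hin := i.isLt
  rw [AnegMul, Finset.sum_eq_single_of_mem (⟨(i : ℕ) - 1, by omega⟩ : Fin (2 * (n - 1)))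
    (Finset.mem_univ _)
    (by
      intro c _ hcne
      have hc : ¬ (c : ℕ) = (i : ℕ) - 1 := by
        simpa [ne_eq, Fin.ext_iff] using hcne
      have hcl := c.isLt
      have hz : min (starA n i c) 0 = 0 := by
        by_cases h2 : (c : ℕ) = (n - 1) + ((i : ℕ) - 1)
        · have : c = ⟨(n - 1) + ((i : ℕ) - 1), by omega⟩ := by
            exact Fin.ext h2
          rw [this, starA_pos1 n i hi]; norm_num
        · rw [starA_zero n i c hi hc h2]; norm_num
      rw [hz, zero_mul])]
  rw [starA_neg1 n i hi]
  norm_num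

lemma apos_leaf (n : ℕ) (u : Fin (2 * (n - 1)) → ℝ) (i : Fin n) (hi : (i : ℕ) ≠ 0) :
    AposMul (starA n) u i = u ⟨(n - 1) + ((i : ℕ) - 1), by have := i.isLt; omega⟩ := by
  have hin := i.isLt
  rw [AposMul, Finset.sum_eq_single_of_mem (⟨(n - 1) + ((i : ℕ) - 1), by omega⟩ :
      Fin (2 * (n - 1)))
    (Finset.mem_univ _)
    (by
      intro c _ hcne
      have hc : ¬ (c : ℕ) = (n - 1) + ((i : ℕ) - 1) := by
        simpa [ne_eq, Fin.ext_iff] using hcne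
      have hcl := c.isLt
      have hz : max (starA n i c) 0 = 0 := by
        by_cases h1 : (c : ℕ) = (i : ℕ) - 1
        · have : c = ⟨(i : ℕ) - 1, by omega⟩ := Fin.ext h1
          rw [this, starA_neg1 n i hi]; norm_num
        · rw [starA_zero n i c hi h1 hc]; norm_num
      rw [hz, zero_mul])]
  rw [starA_pos1 n i hi]
  norm_num

end Aux

/-- social shaping of linear-quadratic TMAS-FN over a star
graph — under conditions 1 and 2 there exists a competitive equilibrium whose
trading prices are all equal and positive. -/
theorem star_social_shaping (n : ℕ) (u : Fin (2 * (n - 1)) → ℝ)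
    (hu : ∀ k, 0 < u k) (a : Fin n → ℝ) (θ1 θ2 : Fin n → ℝ)
    (θ1min θ1max θ2min θ2max : ℝ)
    (h1min : 0 < θ1min) (h1 : θ1min ≤ θ1max)
    (h2min : 0 < θ2min) (h2 : θ2min ≤ θ2max)
    (hθ1 : ∀ i, θ1 i ∈ Set.Icc θ1min θ1max)
    (hθ2 : ∀ i, θ2 i ∈ Set.Icc θ2min θ2max)
    (ha : ∀ i, 0 ≤ a i ∧ a i < AposMul (starA n) u i)
    (hcond1 : θ2min / θ1max > (∑ i, a i) / (n : ℝ))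
    (hcond2 : ∀ i, AnegMul (starA n) u i ≤ a i - θ2max / θ1min) :
    ∃ (x e : Fin n → ℝ) (y : Fin (2 * (n - 1)) → ℝ) (β : ℝ) (q : Fin n → ℝ)
      (ξ : Fin (2 * (n - 1)) → ℝ) (lam : Fin n → ℝ),
      IsCE (fun i z => -(1/2) * θ1 i * z ^ 2 + θ2 i * z) (starA n) u a
        x e y β q ξ lam ∧
      (∀ i j, lam i = lam j) ∧ (∀ i, 0 < lam i) := by
  rcases Nat.eq_zero_or_pos n with hn | hn
  · -- degenerate case n = 0
    subst hn
    refine ⟨fun _ => 0, fun _ => 0, fun _ => 0, 0, fun _ => 0, fun _ => 0, fun _ => 0,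
      ⟨fun i => i.elim0, fun i => i.elim0, by simp, fun i => i.elim0, fun k => k.elim0,
        fun k => k.elim0, fun k => k.elim0⟩, fun i => i.elim0, fun i => i.elim0⟩
  -- main case
  have hnR : (0 : ℝ) < (n : ℝ) := by exact_mod_cast hn
  set C : ℝ := ∑ i, a i with hC
  have hC0 : 0 ≤ C := Finset.sum_nonneg fun i _ => (ha i).1
  have h1pos : ∀ i, 0 < θ1 i := fun i => lt_of_lt_of_le h1min (hθ1 i).1
  -- the aggregate demand function
  set g : ℝ → ℝ := fun lam => ∑ i, max 0 ((θ2 i - lam) / θ1 i) with hg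
  have hgcont : Continuous g := by
    apply continuous_finset_sum
    intro i _
    exact continuous_const.max ((continuous_const.sub continuous_id).div_const _)
  have hgtop : g θ2max = 0 := by
    apply Finset.sum_eq_zero
    intro i _
    rw [max_eq_left]
    apply div_nonpos_iff.mpr
    exact Or.inr ⟨by linarith [(hθ2 i).2], (h1pos i).le⟩
  have hgbot : C < g 0 := by
    have hterm : ∀ i ∈ Finset.univ, θ2min / θ1max ≤ max 0 ((θ2 i - 0) / θ1 i) := by
      intro i _
      refine le_trans ?_ (le_max_right _ _)
      rw [sub_zero]
      exact div_le_div₀ (le_trans h2min.le (hθ2 i).1) (hθ2 i).1 (h1pos i) (hθ1 i).2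
    have := Finset.card_nsmul_le_sum Finset.univ _ _ hterm
    simp only [Finset.card_univ, Fintype.card_fin, nsmul_eq_mul] at this
    have hCn : C < (n : ℝ) * (θ2min / θ1max) := by
      rw [gt_iff_lt, div_lt_iff₀ hnR] at hcond1
      linarith [hcond1]
    calc C < (n : ℝ) * (θ2min / θ1max) := hCn
      _ ≤ g 0 := this
  have h2max0 : (0 : ℝ) ≤ θ2max := by linarith
  -- intermediate value theorem
  have hiv : C ∈ g '' Set.Icc 0 θ2max := by
    apply intermediate_value_Icc' h2max0 hgcont.continuousOn
    rw [hgtop]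
    exact ⟨hC0, hgbot.le⟩
  obtain ⟨lam0, hlam0mem, hlam0⟩ := hiv
  have hlampos : 0 < lam0 := by
    rcases lt_or_eq_of_le hlam0mem.1 with h | h
    · exact h
    · exfalso; rw [← h] at hlam0; linarith [hgbot, hlam0]
  -- the equilibrium
  obtain ⟨x, hx⟩ : ∃ x : Fin n → ℝ, x = fun i => max 0 ((θ2 i - lam0) / θ1 i) := ⟨_, rfl⟩
  obtain ⟨e, he⟩ : ∃ e : Fin n → ℝ, e = fun i => a i - x i := ⟨_, rfl⟩
  have hxval : ∀ i, x i = max 0 ((θ2 i - lam0) / θ1 i) := fun i => by rw [hx]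
  have heval : ∀ i, e i = a i - x i := fun i => by rw [he]
  have hxnonneg : ∀ i, 0 ≤ x i := fun i => by rw [hxval i]; exact le_max_left _ _
  have hxle : ∀ i, x i ≤ θ2max / θ1min := by
    intro i
    rw [hxval i]
    apply max_le (div_nonneg h2max0 h1min.le)
    exact div_le_div₀ h2max0 (by linarith [(hθ2 i).2]) h1min (hθ1 i).1
  have hsx : ∑ i, x i = C := by rw [hx]; exact hlam0
  have hbal : ∑ i, e i = 0 := by
    simp only [he, Finset.sum_sub_distrib, hsx, sub_self]
    rw [← hC, sub_self]
  have helo : ∀ i, a i - θ2max / θ1min ≤ e i := by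
    intro i; rw [heval i]; linarith [hxle i]
  have heup : ∀ i, e i ≤ a i := by
    intro i; rw [heval i]; linarith [hxnonneg i]
  -- the flows
  obtain ⟨y, hy⟩ : ∃ y : Fin (2 * (n - 1)) → ℝ, y = fun k : Fin (2 * (n - 1)) =>
      if h : (k : ℕ) < n - 1 then max 0 (-(e ⟨(k : ℕ) + 1, by omega⟩))
      else max 0 (e ⟨(k : ℕ) - (n - 1) + 1, by have := k.isLt; omega⟩) := ⟨_, rfl⟩
  -- capacity constraints
  have hycap : ∀ k, 0 ≤ y k ∧ y k ≤ u k := by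
    intro k
    have hkl := k.isLt
    by_cases hk : (k : ℕ) < n - 1
    · simp only [hy, dif_pos hk]
      set i : Fin n := ⟨(k : ℕ) + 1, by omega⟩ with hidef
      have hi0 : (i : ℕ) ≠ 0 := by simp [hidef]
      have hfin : (⟨(i : ℕ) - 1, by have := i.isLt; omega⟩ : Fin (2 * (n - 1))) = k := by
        apply Fin.ext; simp [hidef]
      have h2 := hcond2 i
      rw [aneg_leaf n u i hi0, hfin] at h2
      show (0 : ℝ) ≤ (0 : ℝ) ⊔ -(e i) ∧ (0 : ℝ) ⊔ -(e i) ≤ u k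
      exact ⟨le_max_left _ _, max_le (hu k).le (by linarith [helo i])⟩
    · simp only [hy, dif_neg hk]
      set i : Fin n := ⟨(k : ℕ) - (n - 1) + 1, by omega⟩ with hidef
      have hi0 : (i : ℕ) ≠ 0 := by simp [hidef]
      have hfin : (⟨(n - 1) + ((i : ℕ) - 1), by have := i.isLt; omega⟩ :
          Fin (2 * (n - 1))) = k := by
        apply Fin.ext; simp only [hidef, Fin.val_mk]; omega
      have hpos := (ha i).2
      rw [apos_leaf n u i hi0, hfin] at hpos
      show (0 : ℝ) ≤ (0 : ℝ) ⊔ e i ∧ (0 : ℝ) ⊔ e i ≤ u k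
      exact ⟨le_max_left _ _, max_le (hu k).le (by linarith [heup i])⟩
  -- flow realization
  have hleafflow : ∀ i : Fin n, (i : ℕ) ≠ 0 → e i = ∑ k, starA n i k * y k := by
    intro i hi0
    have hin := i.isLt
    rw [leaf_sum n i hi0 y]
    have hv1 : y ⟨(i : ℕ) - 1, by omega⟩ = max 0 (-(e i)) := by
      simp only [hy]
      rw [dif_pos (show ((⟨(i : ℕ) - 1, by omega⟩ : Fin (2 * (n - 1))) : ℕ) < n - 1 by
        simp only [Fin.val_mk]; omega)]
      exact congrArg (fun t => (0 : ℝ) ⊔ -(e t)) (Fin.ext (by simp only [Fin.val_mk]; omega))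
    have hv2 : y ⟨(n - 1) + ((i : ℕ) - 1), by omega⟩ = max 0 (e i) := by
      simp only [hy]
      rw [dif_neg (show ¬ ((⟨(n - 1) + ((i : ℕ) - 1), by omega⟩ :
          Fin (2 * (n - 1))) : ℕ) < n - 1 by simp only [Fin.val_mk]; omega)]
      exact congrArg (fun t => (0 : ℝ) ⊔ e t) (Fin.ext (by simp only [Fin.val_mk]; omega))
    rw [hv1, hv2]
    rcases le_total 0 (e i) with h | h
    · rw [max_eq_right h, max_eq_left (by linarith)]; ring
    · rw [max_eq_left h, max_eq_right (by linarith)]; ring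
  have hsumflow : ∑ i, (∑ k, starA n i k * y k) = 0 := by
    rw [Finset.sum_comm]
    apply Finset.sum_eq_zero
    intro k _
    rw [← Finset.sum_mul, starA_col_sum, zero_mul]
  have hflow : ∀ i, e i = ∑ k, starA n i k * y k := by
    intro i
    by_cases hi0 : (i : ℕ) = 0
    · have hkey : ∀ j ∈ Finset.univ.erase i, (∑ k, starA n j k * y k) = e j := by
        intro j hj
        have hjne : j ≠ i := (Finset.mem_erase.mp hj).1
        have : (j : ℕ) ≠ 0 := by
          intro h; exact hjne (Fin.ext (by rw [h, hi0]))
        exact (hleafflow j this).symm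
      have h1 := Finset.add_sum_erase Finset.univ (fun j => ∑ k, starA n j k * y k)
        (Finset.mem_univ i)
      have h2 := Finset.add_sum_erase Finset.univ e (Finset.mem_univ i)
      rw [Finset.sum_congr rfl hkey] at h1
      rw [hsumflow] at h1
      rw [hbal] at h2
      linarith [h1, h2]
    · exact hleafflow i hi0
  -- assemble the competitive equilibrium
  refine ⟨x, e, y, -lam0, fun _ => 0, fun _ => 0, fun _ => lam0,
    ⟨?_, ?_, hbal, hflow, hycap, ?_, ?_⟩, fun i j => rfl, fun i => hlampos⟩
  · -- individual optimality
    intro i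
    refine ⟨hxnonneg i, le_of_eq (heval i), ?_⟩
    intro xi ei hxi hei
    have hq := quad_opt (θ1 i) (θ2 i - lam0) (x i) xi (h1pos i) (hxval i) hxi
    have hmul : lam0 * ei ≤ lam0 * (a i - xi) := mul_le_mul_of_nonneg_left hei hlampos.le
    have hee : e i = a i - x i := heval i
    nlinarith [hq, hmul]
  · intro i; ring
  · intro k; exact ⟨le_refl 0, by ring⟩
  · intro k; simp
end

section
/- Let n ≥ 1 and let θ1_i ∈ [θ1_min, θ1_max] with 0 < θ1_min ≤ θ1_max, θ2_i ∈ [θ2_min, θ2_max] with 0 ≤ θ2_min ≤ θ2_max, for i = 1,…,n, and let C ∈ ℝ. If θ2_min/θ1_max > C/n, then the price λ0 = (Σ_{i=1}^n θ2_i/θ1_i − C) / (Σ_{i=1}^n 1/θ1_i) is strictly positive. -/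
open Finset

/-- under condition 1 (`θ2min/θ1max > C/n`) the closed-form
standard optimal trading price
`λ0 = (Σ_i θ2_i/θ1_i − C) / (Σ_i 1/θ1_i)` is strictly positive. -/
theorem lambda0_pos (n : ℕ) (hn : 1 ≤ n) (θ1 θ2 : Fin n → ℝ)
    (θ1min θ1max θ2min θ2max C : ℝ)
    (h1min : 0 < θ1min) (h1 : θ1min ≤ θ1max)
    (h2min : 0 ≤ θ2min) (h2 : θ2min ≤ θ2max)
    (hθ1 : ∀ i, θ1 i ∈ Set.Icc θ1min θ1max)
    (hθ2 : ∀ i, θ2 i ∈ Set.Icc θ2min θ2max)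
    (hcond : θ2min / θ1max > C / (n : ℝ)) :
    0 < (∑ i, θ2 i / θ1 i - C) / (∑ i, 1 / θ1 i) := by
  have hnpos : (0:ℝ) < n := by exact_mod_cast Nat.lt_of_lt_of_le Nat.zero_lt_one hn
  have h1maxpos : 0 < θ1max := lt_of_lt_of_le h1min h1
  have hθ1pos : ∀ i, 0 < θ1 i := fun i => lt_of_lt_of_le h1min (hθ1 i).1
  have hterm : ∀ i : Fin n, θ2min / θ1max ≤ θ2 i / θ1 i := by
    intro i
    exact div_le_div₀ (le_trans h2min (hθ2 i).1) (hθ2 i).1 (hθ1pos i) (hθ1 i).2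
  have hsum : (n : ℝ) * (θ2min / θ1max) ≤ ∑ i, θ2 i / θ1 i := by
    calc (n : ℝ) * (θ2min / θ1max) = ∑ _i : Fin n, θ2min / θ1max := by
          rw [Finset.sum_const, card_univ, Fintype.card_fin, nsmul_eq_mul]
      _ ≤ ∑ i, θ2 i / θ1 i := Finset.sum_le_sum fun i _ => hterm i
  have hC : C < (n : ℝ) * (θ2min / θ1max) := by
    have h := (div_lt_iff₀ hnpos).mp hcond
    linarith [h]
  have hnum : 0 < ∑ i, θ2 i / θ1 i - C := by linarith
  have hden : 0 < ∑ i, 1 / θ1 i := by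
    apply Finset.sum_pos
    · intro i _; exact one_div_pos.mpr (hθ1pos i)
    · exact univ_nonempty_iff.mpr (Fin.pos_iff_nonempty.mp (by omega))
  exact div_pos hnum hden
end

section
/- Let λ0 > 0 and, for each i, let θ1_i ∈ [θ1_min, θ1_max] with 0 < θ1_min ≤ θ1_max and θ2_i ∈ [θ2_min, θ2_max] with 0 < θ2_min ≤ θ2_max. Define x_i* = max{0, (θ2_i − λ0)/θ1_i} and e_i* = a_i − x_i*. If (A⁻u)_i ≤ a_i − θ2_max/θ1_min and a_i < (A⁺u)_i, then the trading decision is strictly within the flow bounds: (A⁻u)_i < e_i* < (A⁺u)_i. -/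
open Finset

/-- under condition 2, the agent-level optimal trading decision
`e_i* = a_i − max{0, (θ2_i − λ0)/θ1_i}` lies strictly within the flow bounds
`(A⁻u)_i < e_i* < (A⁺u)_i`. -/
theorem trading_strictly_within_bounds {n m : ℕ} (A : Fin n → Fin m → ℝ)
    (u : Fin m → ℝ) (i : Fin n) (lam0 : ℝ) (hlam0 : 0 < lam0)
    (θ1 θ2 θ1min θ1max θ2min θ2max a : ℝ)
    (h1min : 0 < θ1min) (h1 : θ1min ≤ θ1max)
    (h2min : 0 < θ2min) (h2 : θ2min ≤ θ2max)
    (hθ1 : θ1 ∈ Set.Icc θ1min θ1max) (hθ2 : θ2 ∈ Set.Icc θ2min θ2max)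
    (xs es : ℝ) (hxs : xs = max 0 ((θ2 - lam0) / θ1)) (hes : es = a - xs)
    (hc2 : AnegMul A u i ≤ a - θ2max / θ1min)
    (hc3 : a < AposMul A u i) :
    AnegMul A u i < es ∧ es < AposMul A u i := by
  obtain ⟨h1l, h1r⟩ := hθ1
  obtain ⟨h2l, h2r⟩ := hθ2
  have hθ1pos : 0 < θ1 := lt_of_lt_of_le h1min h1l
  have hqpos : 0 < θ2max / θ1min := div_pos (lt_of_lt_of_le h2min h2) h1min
  have hlt : (θ2 - lam0) / θ1 < θ2max / θ1min := by
    calc (θ2 - lam0) / θ1 < θ2 / θ1 := by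
          gcongr <;> linarith
    _ ≤ θ2max / θ1min := by
          apply div_le_div₀ (le_of_lt (lt_of_lt_of_le h2min h2)) h2r h1min h1l
  have hxslt : xs < θ2max / θ1min := by
    rw [hxs]; exact max_lt hqpos hlt
  have hxsnn : 0 ≤ xs := hxs ▸ le_max_left _ _
  constructor
  · linarith
  · linarith
end

section
/- Consider n agents with linear-quadratic utilities f_i(x) = −(1/2) θ1_i x² + θ2_i x, θ1_i > 0, θ2_i ≥ 0, local resources a_i ≥ 0, and C = Σ_{i=1}^n a_i. Let λ0 = (Σ_{i=1}^n θ2_i/θ1_i − C) / (Σ_{i=1}^n 1/θ1_i). If 0 < λ0 ≤ θ2_i for all i, then setting x_i* = (θ2_i − λ0)/θ1_i and e_i* = a_i − x_i*, the triple (x*, e*, λ0) is a standard competitive equilibrium. -/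
open Finset

/-- for linear-quadratic agents, if the closed-form price
`λ0 = (Σ_i θ2_i/θ1_i − C)/(Σ_i 1/θ1_i)` satisfies `0 < λ0 ≤ θ2_i` for all `i`,
then `x_i* = (θ2_i − λ0)/θ1_i`, `e_i* = a_i − x_i*` together with `λ0` form a
standard competitive equilibrium. -/
theorem lq_standard_ce (n : ℕ) (θ1 θ2 a : Fin n → ℝ)
    (h1 : ∀ i, 0 < θ1 i) (h2 : ∀ i, 0 ≤ θ2 i) (ha : ∀ i, 0 ≤ a i)
    (lam0 : ℝ)
    (hlam0 : lam0 = (∑ i, θ2 i / θ1 i - ∑ i, a i) / (∑ i, 1 / θ1 i))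
    (hpos : 0 < lam0) (hle : ∀ i, lam0 ≤ θ2 i)
    (x e : Fin n → ℝ)
    (hx : ∀ i, x i = (θ2 i - lam0) / θ1 i) (he : ∀ i, e i = a i - x i) :
    -- (i) each agent's decision maximizes its payoff
    (∀ i, (0 ≤ x i ∧ x i + e i ≤ a i) ∧
      ∀ xi ei : ℝ, 0 ≤ xi → xi + ei ≤ a i →
        -(1/2) * θ1 i * xi ^ 2 + θ2 i * xi + lam0 * ei ≤
          -(1/2) * θ1 i * (x i) ^ 2 + θ2 i * (x i) + lam0 * (e i)) ∧
    -- (ii) total demand and supply balance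
    (∑ i, e i = 0) := by
  constructor
  · intro i
    have hθ := h1 i
    have hxi : x i = (θ2 i - lam0) / θ1 i := hx i
    have hxval : θ1 i * x i = θ2 i - lam0 := by
      rw [hxi]; field_simp
    constructor
    · constructor
      · rw [hxi]
        exact div_nonneg (by linarith [hle i]) hθ.le
      · rw [he i]; ring_nf; exact le_rfl
    · intro xi ei _ hsum
      have h1' : lam0 * ei ≤ lam0 * (a i - xi) :=
        mul_le_mul_of_nonneg_left (by linarith) hpos.le
      have h2' : -(1/2) * θ1 i * xi ^ 2 + θ2 i * xi + lam0 * (a i - xi) ≤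
          -(1/2) * θ1 i * (x i) ^ 2 + θ2 i * (x i) + lam0 * (e i) := by
        rw [he i]
        have e1 : θ1 i * x i * xi = (θ2 i - lam0) * xi := by rw [hxval]
        have e2 : θ1 i * x i * x i = (θ2 i - lam0) * x i := by rw [hxval]
        nlinarith [e1, e2, mul_nonneg hθ.le (sq_nonneg (xi - x i))]
      linarith
  · have hne : (∑ i, 1 / θ1 i) ≠ 0 := by
      by_contra h
      rw [h] at hlam0
      simp at hlam0
      exact absurd hlam0 (by linarith)
    have key : lam0 * (∑ i, 1 / θ1 i) = ∑ i, θ2 i / θ1 i - ∑ i, a i := by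
      rw [hlam0, div_mul_cancel₀ _ hne]
    have : ∑ i, e i = ∑ i, a i - ∑ i, x i := by
      simp only [he]; rw [Finset.sum_sub_distrib]
    rw [this]
    have hxsum : ∑ i, x i = ∑ i, θ2 i / θ1 i - lam0 * ∑ i, 1 / θ1 i := by
      rw [Finset.mul_sum, ← Finset.sum_sub_distrib]
      refine Finset.sum_congr rfl fun i _ => ?_
      rw [hx i, sub_div, mul_one_div]
    rw [hxsum, key]; ring
end

section
/- Consider a TMAS-FN with infinite arc capacities whose network is connected and contains both orientations of every arc, with each f_i concave on [0, ∞). If (x*, e*, y*, β*, q*, ξ*, λ*) is an infinite-capacity competitive equilibrium with λ_i* > 0 for all i, then x* maximizes Σ_{i=1}^n f_i(x_i) over the set {x ∈ ℝ^n : x_i ≥ 0 for all i, Σ_{i=1}^n x_i = Σ_{i=1}^n a_i}. -/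
open Finset

/-- with infinite arc capacity, connected network with both
orientations, concave utilities and positive prices, the consumption profile
of a competitive equilibrium maximizes total welfare over the resource-balance
set `{x : x ≥ 0, Σ x_i = Σ a_i}`. -/
theorem ce_consumption_maximizes {n m : ℕ} (f : Fin n → ℝ → ℝ)
    (A : Fin n → Fin m → ℝ) (a : Fin n → ℝ)
    (hA : IsIncidence A) (hconn : ConnectedNet A) (hrev : BothOrientations A)
    (ha : ∀ i, 0 ≤ a i)
    (hf : ∀ i, ConcaveOn ℝ (Set.Ici (0:ℝ)) (f i))
    (x e : Fin n → ℝ) (y : Fin m → ℝ) (β : ℝ) (q : Fin n → ℝ)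
    (ξ : Fin m → ℝ) (lam : Fin n → ℝ)
    (hce : IsCEInf f A a x e y β q ξ lam)
    (hpos : ∀ i, 0 < lam i) :
    (∀ i, 0 ≤ x i) ∧ (∑ i, x i = ∑ i, a i) ∧
    ∀ x' : Fin n → ℝ, (∀ i, 0 ≤ x' i) → (∑ i, x' i = ∑ i, a i) →
      ∑ i, f i (x' i) ≤ ∑ i, f i (x i) := by

  obtain ⟨hopt, hprice, hbal, hflow, hy, hxi0, hxi⟩ := hce
  -- q is constant along adjacent nodes
  have hadj : ∀ i j, Adjacent A i j → q i = q j := by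
    intro i j ⟨k, hk⟩
    obtain ⟨s, t, hst, hs, ht, h0⟩ := hA k
    have hsum : ∑ i, q i * A i k = q s - q t := by
      rw [Finset.sum_eq_add_of_mem s t (Finset.mem_univ s) (Finset.mem_univ t) hst]
      · rw [hs, ht]; ring
      · intro c _ hc
        rw [h0 c hc.1 hc.2, mul_zero]
    have hqst : q s = q t := by
      have := (hxi k).symm.trans (hxi0 k)
      rw [hsum] at this; linarith
    rcases hk with ⟨hi, hj⟩ | ⟨hi, hj⟩
    · have his : i = s := by
        by_contra h
        rcases eq_or_ne i t with rfl | h2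
        · rw [ht] at hi; norm_num at hi
        · rw [h0 i h h2] at hi; norm_num at hi
      have hjt : j = t := by
        by_contra h
        rcases eq_or_ne j s with rfl | h2
        · rw [hs] at hj; norm_num at hj
        · rw [h0 j h2 h] at hj; norm_num at hj
      rw [his, hjt]; exact hqst
    · have hit : i = t := by
        by_contra h
        rcases eq_or_ne i s with rfl | h2
        · rw [hs] at hi; norm_num at hi
        · rw [h0 i h2 h] at hi; norm_num at hi
      have hjs : j = s := by
        by_contra h
        rcases eq_or_ne j t with rfl | h2
        · rw [ht] at hj; norm_num at hj
        · rw [h0 j h h2] at hj; norm_num at hj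
      rw [hit, hjs]; exact hqst.symm
  have hqconst : ∀ i j, q i = q j := by
    intro i j
    induction hconn i j with
    | refl => rfl
    | tail _ h ih => exact ih.trans (hadj _ _ h)
  have hlamconst : ∀ i j, lam i = lam j := by
    intro i j; rw [hprice i, hprice j, hqconst i j]
  -- e i = a i - x i
  have he : ∀ i, e i = a i - x i := by
    intro i
    obtain ⟨hx0, he1, hmax⟩ := hopt i
    have := hmax (x i) (a i - x i) hx0 le_rfl
    have hlam := hpos i
    nlinarith
  have hx0 : ∀ i, 0 ≤ x i := fun i => (hopt i).1
  have hsum : ∑ i, x i = ∑ i, a i := by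
    have : ∑ i, (a i - x i) = 0 := by
      rw [← hbal]; exact Finset.sum_congr rfl fun i _ => (he i).symm
    rw [Finset.sum_sub_distrib] at this; linarith
  refine ⟨hx0, hsum, fun x' hx' hsum' => ?_⟩
  have key : ∀ i, f i (x' i) + lam i * (a i - x' i) ≤ f i (x i) + lam i * (a i - x i) := by
    intro i
    have := (hopt i).2.2 (x' i) (a i - x' i) (hx' i) le_rfl
    rw [he i] at this; exact this
  rcases Nat.eq_zero_or_pos n with rfl | hn
  · simp
  have i0 : Fin n := ⟨0, hn⟩
  have hsum2 : ∑ i, (f i (x' i) + lam i * (a i - x' i)) ≤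
      ∑ i, (f i (x i) + lam i * (a i - x i)) :=
    Finset.sum_le_sum fun i _ => key i
  have hc : ∀ i, lam i = lam i0 := fun i => hlamconst i i0
  have e1 : ∑ i, lam i * (a i - x' i) = 0 := by
    have : ∑ i, lam i * (a i - x' i) = lam i0 * ∑ i, (a i - x' i) := by
      rw [Finset.mul_sum]
      exact Finset.sum_congr rfl fun i _ => by rw [hc i]
    rw [this, Finset.sum_sub_distrib, hsum', sub_self, mul_zero]
  have e2 : ∑ i, lam i * (a i - x i) = 0 := by
    have : ∑ i, lam i * (a i - x i) = lam i0 * ∑ i, (a i - x i) := by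
      rw [Finset.mul_sum]
      exact Finset.sum_congr rfl fun i _ => by rw [hc i]
    rw [this, Finset.sum_sub_distrib, hsum, sub_self, mul_zero]
  rw [Finset.sum_add_distrib, Finset.sum_add_distrib, e1, e2] at hsum2
  linarith
end
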